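/- arXiv:1808.02368 — 6 statements merged into one kernel-verified Lean document; each statement's English description precedes it below -/
import Mathlib

section
/- Let G be an additive abelian group and let A, B be non-empty finite subsets of G satisfying #A = #B and 0 ∉ B. If A is locally matched to B, then A is matched to B (i.e., there exists a matching from A to B). -/
/-- A matching from the finite subset `A` to the finite subset `B` of an additive abelian
group is a bijection `f : A → B` such that `a + f a ∉ A` for all `a ∈ A`. -/
def IsMatching {G : Type*} [AddCommGroup G] (A B : Finset G) (f : G → G) : Prop :=
  Set.BijOn f (A : Set G) (B : Set G) ∧ ∀ a ∈ A, a + f a ∉ A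

/-- `A` is matched to `B` if there exists a matching from `A` to `B`. -/
def Matched {G : Type*} [AddCommGroup G] (A B : Finset G) : Prop :=
  ∃ f : G → G, IsMatching A B f

/-- `A` is locally matched to `B` if for every proper subgroup `H < G` with `H ∩ B ≠ ∅`
and `a + H ⊆ A` for some `a ∈ A`, there are a subset `A' ⊆ A` and a bijection
`f : A' → H ∩ B` with `a + f a ∉ A` for all `a ∈ A'`. -/
def LocallyMatched {G : Type*} [AddCommGroup G] (A B : Finset G) : Prop :=
  ∀ H : AddSubgroup G, H ≠ ⊤ → ((H : Set G) ∩ (B : Set G)).Nonempty →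
    (∃ a ∈ A, ∀ h ∈ H, a + h ∈ A) →
    ∃ A' ⊆ (A : Set G), ∃ f : G → G,
      Set.BijOn f A' ((H : Set G) ∩ (B : Set G)) ∧ ∀ a ∈ A', a + f a ∉ A

open Finset

/-- If translating a finite set by `g` maps it into itself, so does translating by `-g`. -/
lemma aux_stab_neg {G : Type*} [AddCommGroup G] {S : Finset G} {g : G}
    (hg : ∀ x ∈ S, x + g ∈ S) : ∀ x ∈ S, x + -g ∈ S := by
  classical
  have himg : S.image (· + g) = S := by
    apply Finset.eq_of_subset_of_card_le
    · intro y hy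
      obtain ⟨x, hx, rfl⟩ := Finset.mem_image.1 hy
      exact hg x hx
    · rw [Finset.card_image_of_injective _ (add_left_injective g)]
  intro x hx
  rw [← himg] at hx
  obtain ⟨y, hy, hxy⟩ := Finset.mem_image.1 hx
  have hyx : x + -g = y := by rw [← hxy]; abel
  rwa [hyx]

/-- Weak Kneser-type lemma obtained by iterating the Dyson transform: given finite nonempty
`S` and `C ∋ b₀`, there is `S' ⊇ S` with `S' + b₀ ⊆ S + C`, stabilized by a subgroup `H`
(given also as a finset `HF`), with `|S'| + |H| ≥ |S| + |C|`. -/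
lemma aux_EK {G : Type*} [AddCommGroup G] (C : Finset G) :
    ∀ S : Finset G, S.Nonempty → ∀ b₀ ∈ C,
      ∃ (S' HF : Finset G) (H : AddSubgroup G),
        ((HF : Set G) = (H : Set G)) ∧ S ⊆ S' ∧
        (∀ x ∈ S', ∃ u ∈ S, ∃ v ∈ C, x + b₀ = u + v) ∧
        (∀ x ∈ S', ∀ h ∈ HF, x + h ∈ S') ∧
        S.card + C.card ≤ S'.card + HF.card := by
  classical
  induction C using Finset.strongInductionOn with
  | _ C ih =>
    intro S hS b₀ hb₀
    by_cases hcase : ∀ u ∈ S, ∀ v ∈ C, u + v - b₀ ∈ S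
    · -- terminal case: C - b₀ stabilizes S
      obtain ⟨s₀, hs₀⟩ := hS
      set H : AddSubgroup G :=
        AddSubgroup.closure ((C.image (fun v => v - b₀) : Finset G) : Set G) with hHdef
      have hHK : ∀ g ∈ H, ∀ x ∈ S, x + g ∈ S := by
        intro g hg
        refine AddSubgroup.closure_induction ?_ ?_ ?_ ?_ hg
        · intro v hv x hx
          obtain ⟨w, hw, rfl⟩ := Finset.mem_image.1 hv
          have h1 := hcase x hx w hw
          have h2 : x + (w - b₀) = x + w - b₀ := by abel
          rwa [h2]
        · intro x hx; simpa using hx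
        · intro a b _ _ pa pb x hx
          have := pb _ (pa x hx)
          rwa [← add_assoc]
        · intro a _ pa
          exact aux_stab_neg pa
      set HF : Finset G := (S.image (fun y => y - s₀)).filter (fun g => g ∈ H) with hHFdef
      have hHF : (HF : Set G) = (H : Set G) := by
        ext g
        simp only [Finset.mem_coe, hHFdef, Finset.mem_filter, Finset.mem_image,
          SetLike.mem_coe]
        constructor
        · rintro ⟨-, hgH⟩; exact hgH
        · intro hgH
          exact ⟨⟨s₀ + g, hHK g hgH s₀ hs₀, by abel⟩, hgH⟩
      have hCHF : C.card ≤ HF.card := by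
        apply Finset.card_le_card_of_injOn (fun v => v - b₀)
        · intro v hv
          refine Finset.mem_filter.2 ⟨?_, ?_⟩
          · have hy : s₀ + (v - b₀) ∈ S := by
              have h1 := hcase s₀ hs₀ v hv
              have h2 : s₀ + (v - b₀) = s₀ + v - b₀ := by abel
              rwa [h2]
            exact Finset.mem_image.2 ⟨s₀ + (v - b₀), hy, by abel⟩
          · exact AddSubgroup.subset_closure (Finset.mem_coe.2 (Finset.mem_image.2 ⟨v, hv, rfl⟩))
        · intro a _ b _ hab
          have := congrArg (· + b₀) hab
          simpa [sub_add_cancel] using this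
      refine ⟨S, HF, H, hHF, subset_rfl, ?_, ?_, ?_⟩
      · intro x hx; exact ⟨x, hx, b₀, hb₀, rfl⟩
      · intro x hx h hh
        exact hHK h (Finset.mem_filter.1 hh).2 x hx
      · omega
    · -- transform case
      push_neg at hcase
      obtain ⟨u, hu, v, hv, huv⟩ := hcase
      set e : G := u - b₀ with hedef
      set Ce : Finset G := C.image (fun c => c + e) with hCedef
      set S₁ : Finset G := S ∪ Ce with hS₁def
      set C₁ : Finset G := C.filter (fun c => c + e ∈ S) with hC₁def
      have hb₀C₁ : b₀ ∈ C₁ := by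
        refine Finset.mem_filter.2 ⟨hb₀, ?_⟩
        have h1 : b₀ + e = u := by rw [hedef]; abel
        rwa [h1]
      have hvC₁ : v ∉ C₁ := by
        intro hvc
        have h1 := (Finset.mem_filter.1 hvc).2
        have h2 : v + e = u + v - b₀ := by rw [hedef]; abel
        rw [h2] at h1
        exact huv h1
      have hC₁C : C₁ ⊂ C :=
        ⟨Finset.filter_subset _ _, fun hsub => hvC₁ (hsub hv)⟩
      obtain ⟨S', HF, H, hHF, hSS', hsum, hstab, hcards⟩ :=
        ih C₁ hC₁C S₁ (hS.mono Finset.subset_union_left) b₀ hb₀C₁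
      have htrans : ∀ u₁ ∈ S₁, ∀ v₁ ∈ C₁, ∃ p ∈ S, ∃ q ∈ C, u₁ + v₁ = p + q := by
        intro u₁ hu₁ v₁ hv₁
        have hv₁C : v₁ ∈ C := Finset.filter_subset _ _ hv₁
        rcases Finset.mem_union.1 hu₁ with h1 | h2
        · exact ⟨u₁, h1, v₁, hv₁C, rfl⟩
        · obtain ⟨c'', hc'', rfl⟩ := Finset.mem_image.1 h2
          exact ⟨v₁ + e, (Finset.mem_filter.1 hv₁).2, c'', hc'', by abel⟩
      have hkey : S₁.card + C₁.card = S.card + C.card := by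
        have h1 : S₁.card + (S ∩ Ce).card = S.card + Ce.card :=
          Finset.card_union_add_card_inter S Ce
        have h2 : Ce.card = C.card := Finset.card_image_of_injective _ (add_left_injective e)
        have h3 : C₁.image (fun c => c + e) = S ∩ Ce := by
          ext y
          constructor
          · intro hy
            obtain ⟨c', hc', rfl⟩ := Finset.mem_image.1 hy
            have hc'2 := Finset.mem_filter.1 hc'
            exact Finset.mem_inter.2 ⟨hc'2.2, Finset.mem_image.2 ⟨c', hc'2.1, rfl⟩⟩
          · intro hy
            obtain ⟨hyS, hyCe⟩ := Finset.mem_inter.1 hy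
            obtain ⟨c', hc', rfl⟩ := Finset.mem_image.1 hyCe
            exact Finset.mem_image.2 ⟨c', Finset.mem_filter.2 ⟨hc', hyS⟩, rfl⟩
        have h4 : C₁.card = (S ∩ Ce).card := by
          rw [← h3, Finset.card_image_of_injective _ (add_left_injective e)]
        omega
      refine ⟨S', HF, H, hHF, Finset.subset_union_left.trans hSS', ?_, hstab, by omega⟩
      intro x hx
      obtain ⟨u₁, hu₁, v₁, hv₁, hxe⟩ := hsum x hx
      obtain ⟨p, hp, q, hq, hpq⟩ := htrans u₁ hu₁ v₁ hv₁
      exact ⟨p, hp, q, hq, by rw [hxe, hpq]⟩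

theorem locally_matched_implies_matched {G : Type*} [AddCommGroup G]
    (A B : Finset G) (hA : A.Nonempty) (hB : B.Nonempty)
    (hcard : A.card = B.card) (h0 : (0 : G) ∉ B)
    (hloc : LocallyMatched A B) : Matched A B := by
  classical
  by_contra hm
  -- Hall's condition must fail
  set t : {x // x ∈ A} → Finset G := fun a => B.filter (fun b => ↑a + b ∉ A) with htdef
  have hall : ¬ ∀ s : Finset {x // x ∈ A}, s.card ≤ (s.biUnion t).card := by
    intro hcond
    obtain ⟨f, hfinj, hfmem⟩ := (Finset.all_card_le_biUnion_card_iff_exists_injective t).1 hcond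
    apply hm
    have hfB : ∀ a, f a ∈ B := fun a => (Finset.mem_filter.1 (hfmem a)).1
    have hfnot : ∀ a : {x // x ∈ A}, ↑a + f a ∉ A := fun a => (Finset.mem_filter.1 (hfmem a)).2
    have hFeq : A.attach.image (fun a => f a) = B := by
      apply Finset.eq_of_subset_of_card_le
      · intro b hb
        obtain ⟨a, _, rfl⟩ := Finset.mem_image.1 hb
        exact hfB a
      · rw [Finset.card_image_of_injective _ hfinj, Finset.card_attach, hcard]
    refine ⟨fun x => if hx : x ∈ A then f ⟨x, hx⟩ else x, ⟨⟨?_, ?_, ?_⟩, ?_⟩⟩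
    · intro x hx
      have hxA : x ∈ A := hx
      simp only [dif_pos hxA]
      exact hfB ⟨x, hxA⟩
    · intro x hx y hy hxy
      have hxA : x ∈ A := hx
      have hyA : y ∈ A := hy
      simp only [dif_pos hxA, dif_pos hyA] at hxy
      exact congrArg Subtype.val (hfinj hxy)
    · intro b hb
      have hbB : b ∈ B := hb
      rw [← hFeq] at hbB
      obtain ⟨a, _, rfl⟩ := Finset.mem_image.1 hbB
      refine ⟨↑a, a.2, ?_⟩
      simp only [dif_pos a.2]
    · intro a ha
      simp only [dif_pos ha]
      exact hfnot ⟨a, ha⟩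
  push_neg at hall
  obtain ⟨sb, hsb⟩ := hall
  set S₀ : Finset G := sb.image Subtype.val with hS₀def
  have hS₀A : S₀ ⊆ A := by
    intro x hx
    obtain ⟨a, _, rfl⟩ := Finset.mem_image.1 hx
    exact a.2
  have hS₀card : S₀.card = sb.card := Finset.card_image_of_injective _ Subtype.val_injective
  have hS₀ne : S₀.Nonempty := by
    rcases sb.eq_empty_or_nonempty with rfl | h
    · simp at hsb
    · exact h.image _
  obtain ⟨a₀, ha₀⟩ := hS₀ne
  set T : Finset G := B.filter (fun b => ∀ x ∈ S₀, x + b ∈ A) with hTdef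
  have hTcard : B.card < T.card + S₀.card := by
    have hN : sb.biUnion t ⊆ B := by
      intro b hb
      obtain ⟨a, _, hbt⟩ := Finset.mem_biUnion.1 hb
      exact (Finset.mem_filter.1 hbt).1
    have hTN : T = B \ sb.biUnion t := by
      ext b
      simp only [hTdef, Finset.mem_filter, Finset.mem_sdiff, Finset.mem_biUnion]
      constructor
      · rintro ⟨hbB, hballs⟩
        refine ⟨hbB, ?_⟩
        rintro ⟨a, ha, hbt⟩
        exact (Finset.mem_filter.1 hbt).2
          (hballs _ (Finset.mem_image.2 ⟨a, ha, rfl⟩))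
      · rintro ⟨hbB, hnot⟩
        refine ⟨hbB, ?_⟩
        intro x hx
        obtain ⟨a, ha, rfl⟩ := Finset.mem_image.1 hx
        by_contra hxa
        exact hnot ⟨a, ha, Finset.mem_filter.2 ⟨hbB, hxa⟩⟩
    have h5 : (B \ sb.biUnion t).card + (sb.biUnion t).card = B.card :=
      Finset.card_sdiff_add_card_eq_card hN
    rw [hTN]
    omega
  -- Build the maximal pair (S, C)
  set C : Finset G := (A.image (fun x => x - a₀)).filter (fun g => ∀ x ∈ S₀, x + g ∈ A)
    with hCdef
  have hmemC : ∀ g, g ∈ C ↔ ∀ x ∈ S₀, x + g ∈ A := by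
    intro g
    constructor
    · exact fun hg => (Finset.mem_filter.1 hg).2
    · intro hg
      exact Finset.mem_filter.2
        ⟨Finset.mem_image.2 ⟨a₀ + g, hg a₀ ha₀, by abel⟩, hg⟩
  have h0C : (0 : G) ∈ C := (hmemC 0).2 (fun x hx => by simpa using hS₀A hx)
  have hTC : T ⊆ C := fun b hb => (hmemC b).2 (Finset.mem_filter.1 hb).2
  set S : Finset G := A.filter (fun g => ∀ c ∈ C, g + c ∈ A) with hSdef
  have hS₀S : S₀ ⊆ S := by
    intro x hx
    exact Finset.mem_filter.2 ⟨hS₀A hx, fun c hc => (hmemC c).1 hc x hx⟩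
  have hSne : S.Nonempty := ⟨a₀, hS₀S ha₀⟩
  have hSC_A : ∀ u ∈ S, ∀ v ∈ C, u + v ∈ A := fun u hu v hv => (Finset.mem_filter.1 hu).2 v hv
  have hengine : A.card + 1 ≤ S.card + T.card := by
    have h6 := Finset.card_le_card hS₀S
    omega
  -- Apply the transform lemma
  obtain ⟨S', HF, H, hHF, hSS', hsum, hstab, hEKcard⟩ := aux_EK C S hSne 0 h0C
  have hmemHF : ∀ h, h ∈ HF ↔ h ∈ H := by
    intro h
    constructor
    · intro hh
      have h1 : h ∈ (HF : Set G) := hh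
      rw [hHF] at h1
      exact h1
    · intro hh
      have h1 : h ∈ (H : Set G) := hh
      rw [← hHF] at h1
      exact h1
  have hS'A : S' ⊆ A := by
    intro x hx
    obtain ⟨u, hu, v, hv, hxe⟩ := hsum x hx
    rw [add_zero] at hxe
    rw [hxe]
    exact hSC_A u hu v hv
  have hHFC : HF ⊆ C := by
    intro h hh
    refine (hmemC h).2 (fun x hx => ?_)
    exact hS'A (hstab x (hSS' (hS₀S hx)) h hh)
  set D : Finset G := A.filter (fun a => ∀ h ∈ HF, a + h ∈ A) with hDdef
  have hS'D : S' ⊆ D := by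
    intro x hx
    exact Finset.mem_filter.2 ⟨hS'A hx, fun h hh => hS'A (hstab x hx h hh)⟩
  have hHtop : H ≠ ⊤ := by
    intro htop
    obtain ⟨x₀, hx₀⟩ := hSne
    have hx₀S' : x₀ ∈ S' := hSS' hx₀
    have hallA : ∀ g : G, g ∈ A := by
      intro g
      have hg : g - x₀ ∈ HF := (hmemHF _).2 (by rw [htop]; trivial)
      have h7 := hstab x₀ hx₀S' _ hg
      have hxg : x₀ + (g - x₀) = g := by abel
      rw [hxg] at h7
      exact hS'A h7
    have hBA : B ⊆ A.erase 0 := fun b hb =>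
      Finset.mem_erase.2 ⟨fun h => h0 (h ▸ hb), hallA b⟩
    have h8 := Finset.card_le_card hBA
    rw [Finset.card_erase_of_mem (hallA 0)] at h8
    have hA1 : 1 ≤ A.card := Finset.card_pos.2 hA
    omega
  have hCuni : T.card + HF.card ≤ C.card + (T ∩ HF).card := by
    have h1 : T ∪ HF ⊆ C := Finset.union_subset hTC hHFC
    have h2 := Finset.card_le_card h1
    have h3 := Finset.card_union_add_card_inter T HF
    omega
  have hTHF : (T ∩ HF).card ≤ (HF ∩ B).card := by
    apply Finset.card_le_card
    intro x hx
    obtain ⟨h1, h2⟩ := Finset.mem_inter.1 hx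
    exact Finset.mem_inter.2 ⟨h2, (Finset.mem_filter.1 h1).1⟩
  have hDA : D ⊆ A := Finset.filter_subset _ _
  have hDAcard : D.card ≤ A.card := Finset.card_le_card hDA
  have hS'Dcard : S'.card ≤ D.card := Finset.card_le_card hS'D
  rcases (HF ∩ B).eq_empty_or_nonempty with hβ | hβ
  · have hz : (HF ∩ B).card = 0 := by rw [hβ]; exact Finset.card_empty
    omega
  · have hHB : ((H : Set G) ∩ (B : Set G)).Nonempty := by
      obtain ⟨b, hb⟩ := hβ
      obtain ⟨h1, h2⟩ := Finset.mem_inter.1 hb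
      exact ⟨b, (hmemHF b).1 h1, h2⟩
    have hcoset : ∃ a ∈ A, ∀ h ∈ H, a + h ∈ A := by
      obtain ⟨x₀, hx₀⟩ := hSne
      have hx₀S' : x₀ ∈ S' := hSS' hx₀
      exact ⟨x₀, hS'A hx₀S', fun h hh => hS'A (hstab x₀ hx₀S' h ((hmemHF h).2 hh))⟩
    obtain ⟨A', hA'sub, f, hbij, hfnot⟩ := hloc H hHtop hHB hcoset
    have hA'fin : A'.Finite := A.finite_toSet.subset hA'sub
    have hF'A : hA'fin.toFinset ⊆ A := by
      intro x hx
      exact hA'sub (hA'fin.mem_toFinset.1 hx)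
    have hF'card : hA'fin.toFinset.card = (HF ∩ B).card := by
      have himg : f '' A' = ((HF ∩ B : Finset G) : Set G) := by
        rw [Finset.coe_inter, hHF]
        exact hbij.image_eq
      have h1 : A'.ncard = (HF ∩ B).card := by
        rw [← Set.ncard_coe_finset, ← himg, Set.ncard_image_of_injOn hbij.injOn]
      rw [← h1, Set.ncard_eq_toFinset_card _ hA'fin]
    have hdisj : Disjoint hA'fin.toFinset D := by
      rw [Finset.disjoint_left]
      intro a haF haD
      have haA' : a ∈ A' := hA'fin.mem_toFinset.1 haF
      have hfa := hbij.mapsTo haA'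
      have hfaHF : f a ∈ HF := (hmemHF _).2 hfa.1
      exact hfnot a haA' ((Finset.mem_filter.1 haD).2 (f a) hfaHF)
    have hcards : hA'fin.toFinset.card + D.card ≤ A.card := by
      rw [← Finset.card_union_of_disjoint hdisj]
      exact Finset.card_le_card (Finset.union_subset hF'A hDA)
    omega
end

section
/- An abelian group G has the matching property if and only if G is torsion-free or cyclic of prime order. -/
/-- `G` has the matching property if for all non-empty finite subsets `A, B` of `G` with
`#A = #B` and `0 ∉ B`, there exists a matching from `A` to `B`. -/
def HasMatchingProperty (G : Type*) [AddCommGroup G] : Prop :=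
  ∀ A B : Finset G, A.Nonempty → B.Nonempty → A.card = B.card → (0 : G) ∉ B →
    ∃ f : G → G, IsMatching A B f

/-- A monoid is torsion-free if no nontrivial element has finite order
(the former Mathlib definition `AddMonoid.IsTorsionFree`, removed since). -/
def AddMonoid.IsTorsionFree (G : Type*) [AddMonoid G] : Prop :=
  ∀ g : G, g ≠ 0 → ¬IsOfFinAddOrder g

/-!
If `G` has a finite subgroup `H` with `0 ≠ H ≠ G`, pick `x ∉ H` and let `A = H`,
`B = (H \ {0}) ∪ {x}`: the element of `A` matched to a nonzero element of `H` breaks the matching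
condition. So a group with the matching property is torsion-free or generated by any element of
prime order.

Conversely, in a torsion-free group or a group of prime order every finite `A` that can occur has
`#A < minOrder G`, and Cauchy–Davenport (`min (minOrder G) (#S + #T - 1) ≤ #(S + T)`) then gives
Hall's condition: for `S ⊆ A`, the `b ∈ B` with `S + b ⊆ A` form a set `T` with
`S + (T ∪ {0}) ⊆ A`, so `#S + #T ≤ #A = #B`.
-/

open Finset AddMonoid
open scoped Pointwise

lemma card_add_card_sub_one_le_card_add_of_lt_minOrder {G : Type*} [AddGroup G] [DecidableEq G]
    {S T : Finset G} (hS : S.Nonempty) (hT : T.Nonempty) (h : (#(S + T) : ℕ∞) < minOrder G) :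
    #S + #T - 1 ≤ #(S + T) := by
  have := cauchy_davenport_minOrder_add hS hT
  rw [min_le_iff] at this
  exact_mod_cast this.resolve_left h.not_ge

section Matching

variable {G : Type*} [AddCommGroup G] [DecidableEq G] {A B : Finset G}

lemma exists_isMatching_of_forall_card_le (hcard : #A = #B)
    (hall : ∀ S ⊆ A, #S ≤ #{b ∈ B | ∃ a ∈ S, a + b ∉ A}) :
    ∃ f : G → G, IsMatching A B f := by
  let t : A → Finset G := fun a ↦ {b ∈ B | (a : G) + b ∉ A}
  have hall' : ∀ s : Finset A, #s ≤ #(s.biUnion t) := by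
    intro s
    have hs : s.biUnion t = {b ∈ B | ∃ a ∈ s.map (.subtype _), a + b ∉ A} := by
      ext b
      simp only [t, mem_biUnion, mem_filter, mem_map, Function.Embedding.coe_subtype]
      constructor
      · rintro ⟨a, ha, hb, hab⟩
        exact ⟨hb, a, ⟨a, ha, rfl⟩, hab⟩
      · rintro ⟨hb, _, ⟨a, ha, rfl⟩, hab⟩
        exact ⟨a, ha, hb, hab⟩
    rw [hs, ← card_map (.subtype _)]
    refine hall _ fun a ha ↦ ?_
    obtain ⟨a, -, rfl⟩ := mem_map.1 ha
    exact a.2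
  obtain ⟨f, hf_inj, hf_mem⟩ := (all_card_le_biUnion_card_iff_exists_injective t).1 hall'
  let F : G → G := fun x ↦ if h : x ∈ A then f ⟨x, h⟩ else x
  have hF : ∀ a (ha : a ∈ A), F a = f ⟨a, ha⟩ := fun a ha ↦ dif_pos ha
  have hmaps : Set.MapsTo F A B := fun a ha ↦ by
    rw [hF a ha]; exact (mem_filter.1 (hf_mem _)).1
  have hinj : Set.InjOn F A := fun a ha a' ha' h ↦ by
    rw [hF a ha, hF a' ha'] at h
    exact congrArg Subtype.val (hf_inj h)
  refine ⟨F, ⟨hmaps, hinj, surjOn_of_injOn_of_card_le F hmaps hinj hcard.ge⟩, fun a ha ↦ ?_⟩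
  rw [hF a ha]
  exact (mem_filter.1 (hf_mem ⟨a, ha⟩)).2

lemma card_le_card_filter_of_card_lt_minOrder (hcard : #A = #B) (hB0 : (0 : G) ∉ B)
    (hA : (#A : ℕ∞) < minOrder G) {S : Finset G} (hSA : S ⊆ A) :
    #S ≤ #{b ∈ B | ∃ a ∈ S, a + b ∉ A} := by
  obtain rfl | hS := S.eq_empty_or_nonempty
  · simp
  set T := {b ∈ B | ¬∃ a ∈ S, a + b ∉ A}
  have h0T : (0 : G) ∉ T := fun h ↦ hB0 (mem_filter.1 h).1
  have hsub : S + insert 0 T ⊆ A := by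
    intro x hx
    obtain ⟨a, ha, b, hb, rfl⟩ := mem_add.1 hx
    obtain rfl | hb := mem_insert.1 hb
    · simpa using hSA ha
    · exact not_not.1 fun hab ↦ (mem_filter.1 hb).2 ⟨a, ha, hab⟩
  have hsubcard := card_le_card hsub
  have hCD := card_add_card_sub_one_le_card_add_of_lt_minOrder hS (insert_nonempty 0 T)
    (lt_of_le_of_lt (by exact_mod_cast hsubcard) hA)
  rw [card_insert_of_notMem h0T] at hCD
  have hsplit : #{b ∈ B | ∃ a ∈ S, a + b ∉ A} + #T = #B := card_filter_add_card_filter_not _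
  omega

lemma exists_isMatching_of_card_lt_minOrder (hcard : #A = #B) (hB0 : (0 : G) ∉ B)
    (hA : (#A : ℕ∞) < minOrder G) : ∃ f : G → G, IsMatching A B f :=
  exists_isMatching_of_forall_card_le hcard fun _ hSA ↦
    card_le_card_filter_of_card_lt_minOrder hcard hB0 hA hSA

end Matching

section MatchingProperty

variable {G : Type*} [AddCommGroup G]

lemma hasMatchingProperty_of_forall_card_lt_minOrder
    (h : ∀ B : Finset G, (0 : G) ∉ B → (#B : ℕ∞) < minOrder G) : HasMatchingProperty G := by
  classical
  intro A B _ _ hcard hB0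
  exact exists_isMatching_of_card_lt_minOrder hcard hB0 (hcard ▸ h B hB0)

lemma hasMatchingProperty_of_isTorsionFree (h : AddMonoid.IsTorsionFree G) :
    HasMatchingProperty G := by
  have : IsAddTorsionFree G := isAddTorsionFree_iff_not_isOfFinAddOrder.2 fun g ↦ h g
  exact hasMatchingProperty_of_forall_card_lt_minOrder fun B _ ↦ by simp

lemma hasMatchingProperty_of_natCard_eq_prime {p : ℕ} (hp : p.Prime) (hG : Nat.card G = p) :
    HasMatchingProperty G := by
  classical
  have : Fintype G := @Fintype.ofFinite G (Nat.finite_of_card_ne_zero (hG ▸ hp.ne_zero))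
  have hmin : (p : ℕ∞) ≤ minOrder G := AddMonoid.le_minOrder.2 fun a ha _ ↦ by
    rw [(hp.eq_one_or_self_of_dvd _ (hG ▸ addOrderOf_dvd_natCard a)).resolve_left
      (mt addOrderOf_eq_one_iff.1 ha)]
  refine hasMatchingProperty_of_forall_card_lt_minOrder fun B hB0 ↦ lt_of_lt_of_le ?_ hmin
  have := card_le_univ (insert 0 B)
  rw [card_insert_of_notMem hB0, ← Nat.card_eq_fintype_card, hG] at this
  exact_mod_cast this

lemma HasMatchingProperty.addSubgroup_eq_top (hG : HasMatchingProperty G) {H : AddSubgroup G}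
    (hfin : (H : Set G).Finite) (hbot : H ≠ ⊥) : H = ⊤ := by
  classical
  by_contra htop
  obtain ⟨x, hx⟩ := SetLike.exists_not_mem_of_ne_top H htop rfl
  obtain ⟨h, hhH, hh0⟩ := (H.bot_or_exists_ne_zero).resolve_left hbot
  set A := hfin.toFinset
  have h0A : (0 : G) ∈ A := hfin.mem_toFinset.2 H.zero_mem
  have hxA : x ∉ A := mt hfin.mem_toFinset.1 hx
  set B := insert x (A.erase 0)
  have hcard : #A = #B := by
    rw [card_insert_of_notMem (mt mem_of_mem_erase hxA), card_erase_add_one h0A]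
  have hB0 : (0 : G) ∉ B := by
    simp only [B, mem_insert, mem_erase, ne_eq, not_true_eq_false, false_and, or_false]
    exact fun h0x ↦ hx (h0x ▸ H.zero_mem)
  have hhB : h ∈ B := mem_insert_of_mem (mem_erase.2 ⟨hh0, hfin.mem_toFinset.2 hhH⟩)
  obtain ⟨f, ⟨-, -, hsurj⟩, hf⟩ := hG A B ⟨0, h0A⟩ ⟨x, mem_insert_self _ _⟩ hcard hB0
  obtain ⟨a, ha, rfl⟩ := hsurj hhB
  exact hf a ha (hfin.mem_toFinset.2 (H.add_mem (hfin.mem_toFinset.1 ha) hhH))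

end MatchingProperty

lemma exists_prime_addOrderOf_of_not_isTorsionFree {G : Type*} [AddMonoid G]
    (h : ¬AddMonoid.IsTorsionFree G) : ∃ g : G, (addOrderOf g).Prime := by
  simp only [AddMonoid.IsTorsionFree, not_forall, not_not] at h
  obtain ⟨g, hg0, hg⟩ := h
  have hn1 : addOrderOf g ≠ 1 := mt addOrderOf_eq_one_iff.1 hg0
  refine ⟨(addOrderOf g / (addOrderOf g).minFac) • g, ?_⟩
  rw [addOrderOf_nsmul_addOrderOf_sub hg.addOrderOf_pos.ne' (Nat.minFac_dvd _)]
  exact Nat.minFac_prime hn1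

theorem matching_property_iff_torsionFree_or_prime_cyclic
    (G : Type*) [AddCommGroup G] :
    HasMatchingProperty G ↔
      (AddMonoid.IsTorsionFree G ∨
        (IsAddCyclic G ∧ ∃ p : ℕ, p.Prime ∧ Nat.card G = p)) := by
  constructor
  · refine fun hG ↦ or_iff_not_imp_left.2 fun htf ↦ ?_
    obtain ⟨g, hg⟩ := exists_prime_addOrderOf_of_not_isTorsionFree htf
    have htop : AddSubgroup.zmultiples g = ⊤ :=
      hG.addSubgroup_eq_top (addOrderOf_pos_iff.1 hg.pos).finite_zmultiples
        (AddSubgroup.zmultiples_ne_bot.2 fun hg0 ↦ Nat.not_prime_one (by simpa [hg0] using hg))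
    refine ⟨isAddCyclic_iff_exists_zmultiples_eq_top.2 ⟨g, htop⟩, _, hg, ?_⟩
    rw [← Nat.card_zmultiples, htop, AddSubgroup.card_top]
  · rintro (htf | ⟨-, p, hp, hG⟩)
    exacts [hasMatchingProperty_of_isTorsionFree htf, hasMatchingProperty_of_natCard_eq_prime hp hG]
end

section
/- Let G be an additive abelian group and let A, B be non-empty finite subsets of G with #A = #B = n > 1 and 0 ∉ B. Let n(G) denote the smallest cardinality of a non-zero subgroup of G. If n < n(G), then A is matched to B. -/
open Pointwise


/-- If `#A = #B = n > 1` and `n` is smaller than the cardinality of every non-zero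
subgroup of `G` (so `n < n(G)`, the smallest cardinality of a non-zero subgroup),
then `A` is matched to `B`. -/
theorem matched_of_lt_min_subgroup_card {G : Type*} [AddCommGroup G]
    (A B : Finset G) (hA : A.Nonempty) (hB : B.Nonempty) (n : ℕ)
    (hcardA : A.card = n) (hcardB : B.card = n) (hn : 1 < n) (h0 : (0 : G) ∉ B)
    (hmin : ∀ H : AddSubgroup G, H ≠ ⊥ → ∀ _ : Finite H, n < Nat.card H) :
    Matched A B := by
  classical
  have hmo : (n : ℕ∞) < AddMonoid.minOrder G := by
    have h1 : ((n + 1 : ℕ) : ℕ∞) ≤ AddMonoid.minOrder G := by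
      rw [AddMonoid.le_minOrder_iff_forall_addSubgroup]
      intro s hs hfin
      have := hmin s hs hfin.to_subtype
      exact_mod_cast Nat.succ_le_of_lt this
    refine lt_of_lt_of_le ?_ h1
    exact_mod_cast Nat.lt_succ_self n
  set t : ↥A → Finset G := fun a => B.filter (fun b => (a : G) + b ∉ A) with ht
  have hall : ∀ s : Finset ↥A, s.card ≤ (s.biUnion t).card := by
    intro s
    by_contra hcon
    push_neg at hcon
    set N := s.biUnion t with hN
    set S : Finset G := s.image Subtype.val with hS
    have hScard : S.card = s.card := Finset.card_image_of_injective _ Subtype.coe_injective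
    have hSsub : S ⊆ A := by
      intro x hx
      obtain ⟨a, _, rfl⟩ := Finset.mem_image.1 hx
      exact a.2
    have hNsub : N ⊆ B := by
      intro b hb
      obtain ⟨a, _, hb⟩ := Finset.mem_biUnion.1 hb
      exact Finset.mem_filter.1 hb |>.1
    set T := B \ N with hT
    have hTcard : T.card = n - N.card := by
      rw [Finset.card_sdiff_of_subset hNsub, hcardB]
    have hsle : s.card ≤ n := by
      calc s.card ≤ Fintype.card ↥A := Finset.card_le_univ s
        _ = A.card := Fintype.card_coe A
        _ = n := hcardA
    have h0T : (0 : G) ∉ T := fun h => h0 (Finset.mem_sdiff.1 h).1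
    set T' := insert (0 : G) T with hT'
    have hT'card : T'.card = T.card + 1 := Finset.card_insert_of_notMem h0T
    have hsum : S + T' ⊆ A := by
      intro x hx
      obtain ⟨a, ha, b, hb, rfl⟩ := Finset.mem_add.1 hx
      obtain ⟨a', ha', rfl⟩ := Finset.mem_image.1 ha
      rcases Finset.mem_insert.1 hb with rfl | hb
      · simpa using a'.2
      · obtain ⟨hbB, hbN⟩ := Finset.mem_sdiff.1 hb
        by_contra hc
        exact hbN (Finset.mem_biUnion.2 ⟨a', ha', Finset.mem_filter.2 ⟨hbB, hc⟩⟩)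
    have hSne : S.Nonempty := by
      rw [← Finset.card_pos, hScard]
      omega
    have hT'ne : T'.Nonempty := Finset.insert_nonempty _ _
    have hCD := cauchy_davenport_minOrder_add hSne hT'ne
    have hle : (S + T').card ≤ n := by
      rw [← hcardA]; exact Finset.card_le_card hsum
    rcases min_le_iff.1 hCD with h | h
    · exact absurd (h.trans (by exact_mod_cast hle)) (not_le_of_gt hmo)
    · have : S.card + T'.card - 1 ≤ n := by
        have := h.trans (show ((S + T').card : ℕ∞) ≤ n by exact_mod_cast hle)
        exact_mod_cast this
      omega
  obtain ⟨f, hfinj, hf⟩ := (Finset.all_card_le_biUnion_card_iff_exists_injective t).1 hall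
  set g : G → G := fun x => if h : x ∈ A then f ⟨x, h⟩ else x with hg
  have hgA : ∀ x (hx : x ∈ A), g x = f ⟨x, hx⟩ := fun x hx => dif_pos hx
  have hmapsto : ∀ x ∈ A, g x ∈ B := by
    intro x hx
    rw [hgA x hx]
    exact (Finset.mem_filter.1 (hf ⟨x, hx⟩)).1
  have hinjOn : Set.InjOn g (A : Set G) := by
    intro x hx y hy hxy
    rw [Finset.mem_coe] at hx hy
    rw [hgA x hx, hgA y hy] at hxy
    exact Subtype.ext_iff.1 (hfinj hxy)
  have himg : A.image g = B := by
    apply Finset.eq_of_subset_of_card_le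
    · intro b hb
      obtain ⟨x, hx, rfl⟩ := Finset.mem_image.1 hb
      exact hmapsto x hx
    · rw [Finset.card_image_of_injOn (by simpa using hinjOn), hcardA, hcardB]
  refine ⟨g, ⟨?_, hinjOn, ?_⟩, ?_⟩
  · intro x hx; exact hmapsto x hx
  · intro b hb
    rw [Finset.mem_coe, ← himg] at hb
    obtain ⟨x, hx, rfl⟩ := Finset.mem_image.1 hb
    exact ⟨x, hx, rfl⟩
  · intro a ha
    have := (Finset.mem_filter.1 (hf ⟨a, ha⟩)).2
    rwa [hgA a ha]
end

section
/- Let G be a non-trivial finite cyclic group and let A, B be non-empty subsets of G such that #A = #B, 0 ∉ B, and every element of B is a generator of G. Then there exists at least one matching from A to B. -/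
open Finset Pointwise

private lemma key_cd {G : Type*} [AddCommGroup G] [Fintype G] [DecidableEq G] :
    ∀ (k : ℕ) (T S : Finset G), T.card ≤ k → (0:G) ∈ T → S.Nonempty →
    (∀ t ∈ T, t ≠ 0 → AddSubgroup.zmultiples t = ⊤) →
    min (Fintype.card G) (S.card + T.card - 1) ≤ (S + T).card := by
  intro k
  induction k with
  | zero => intro T S hT h0 _ _; exact absurd (card_pos.2 ⟨0, h0⟩) (by omega)
  | succ k ih =>
    intro T S hT h0 hS hgen
    by_cases htriv : ∀ t ∈ T, t = (0:G)
    · have : T = {0} := subset_antisymm (fun t ht => by simp [htriv t ht]) (by simpa using h0)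
      subst this
      have : S + {0} = S := by simp [Finset.add_singleton]
      rw [this]
      exact le_trans (min_le_right _ _) (by simp)
    · push_neg at htriv
      obtain ⟨t₀, ht₀T, ht₀⟩ := htriv
      by_cases hstab : ∀ a ∈ S, ∀ t ∈ T, a + t ∈ S
      · -- S is invariant under t₀, hence S = univ
        have h1 : t₀ ∈ AddAction.stabilizer G S := by
          rw [AddAction.mem_stabilizer_finset']
          exact fun b hb => by rw [vadd_eq_add, add_comm]; exact hstab b hb t₀ ht₀T
        have h2 : AddSubgroup.zmultiples t₀ ≤ AddAction.stabilizer G S :=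
          AddSubgroup.zmultiples_le_of_mem h1
        rw [hgen t₀ ht₀T ht₀] at h2
        obtain ⟨s₀, hs₀⟩ := hS
        have hSuniv : S = univ := by
          refine eq_univ_of_forall fun g => ?_
          have := h2 (AddSubgroup.mem_top (g - s₀))
          rw [AddAction.mem_stabilizer_iff] at this
          rw [← this]
          exact Finset.mem_vadd_finset.2 ⟨s₀, hs₀, by simp [vadd_eq_add]⟩
        have hsub : S ⊆ S + T := fun x hx => by simpa using add_mem_add hx h0
        calc min (Fintype.card G) (S.card + T.card - 1) ≤ Fintype.card G := min_le_left _ _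
          _ = S.card := by rw [hSuniv, card_univ]
          _ ≤ (S + T).card := card_le_card hsub
      · push_neg at hstab
        obtain ⟨e, heS, t₁, ht₁T, ht₁⟩ := hstab
        set S' := S ∪ (e +ᵥ T) with hS'
        set T' := T ∩ (-e +ᵥ S) with hT'
        have hsub : S' + T' ⊆ S + T := addDysonETransform.subset e (S, T)
        have hcard : S'.card + T'.card = S.card + T.card := addDysonETransform.card e (S, T)
        have h0' : (0:G) ∈ T' := by
          refine mem_inter.2 ⟨h0, Finset.mem_vadd_finset.2 ⟨e, heS, by simp [vadd_eq_add]⟩⟩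
        have ht₁' : t₁ ∉ T' := by
          intro h
          obtain ⟨s, hs, hse⟩ := Finset.mem_vadd_finset.1 (mem_inter.1 h).2
          exact ht₁ (by rw [← hse]; simpa using hs)
        have hlt : T'.card < T.card :=
          card_lt_card ⟨inter_subset_left, fun h => ht₁' (h ht₁T)⟩
        have := ih T' S' (by omega) h0' ⟨e, mem_union_left _ heS⟩
          (fun t ht htne => hgen t (mem_inter.1 ht).1 htne)
        calc min (Fintype.card G) (S.card + T.card - 1)
            = min (Fintype.card G) (S'.card + T'.card - 1) := by rw [hcard]
          _ ≤ (S' + T').card := this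
          _ ≤ (S + T).card := card_le_card hsub



/-- In a non-trivial finite cyclic group, if `#A = #B`, `0 ∉ B` and every element of `B`
generates `G`, then there exists at least one matching from `A` to `B`. -/
theorem matching_of_generators {G : Type*} [AddCommGroup G] [Fintype G]
    [IsAddCyclic G] (hG : Nontrivial G)
    (A B : Finset G) (hA : A.Nonempty) (hB : B.Nonempty)
    (hcard : A.card = B.card) (h0 : (0 : G) ∉ B)
    (hgen : ∀ b ∈ B, AddSubgroup.zmultiples b = ⊤) :
    ∃ f : G → G, IsMatching A B f := by
  classical
  have hBlt : B.card < Fintype.card G := by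
    rw [← Finset.card_univ]
    exact card_lt_card ((Finset.ssubset_univ_iff).2 (fun h => h0 (h ▸ mem_univ 0)))
  have hAlt : A.card < Fintype.card G := hcard ▸ hBlt
  set t : ↥A → Finset G := fun a => B.filter (fun b => (a:G) + b ∉ A) with ht
  have hall : ∀ s : Finset ↥A, s.card ≤ (s.biUnion t).card := by
    intro s
    rcases s.eq_empty_or_nonempty with rfl | hs
    · simp
    set S : Finset G := s.image ((↑) : ↥A → G) with hSdef
    have hScard : S.card = s.card := card_image_of_injective _ Subtype.coe_injective
    have hSA : S ⊆ A := fun x hx => by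
      obtain ⟨a, _, rfl⟩ := mem_image.1 hx; exact a.2
    set N : Finset G := s.biUnion t with hN
    have hNB : N ⊆ B := fun b hb => by
      obtain ⟨a, _, hb'⟩ := mem_biUnion.1 hb; exact (mem_filter.1 hb').1
    set T₀ : Finset G := B \ N with hT₀
    have hT₀B : T₀ ⊆ B := sdiff_subset
    have hgood : ∀ b ∈ T₀, ∀ x ∈ S, x + b ∈ A := by
      intro b hb x hx
      obtain ⟨a, ha, rfl⟩ := mem_image.1 hx
      by_contra h
      exact (mem_sdiff.1 hb).2 (mem_biUnion.2 ⟨a, ha, mem_filter.2 ⟨(mem_sdiff.1 hb).1, h⟩⟩)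
    set T : Finset G := insert 0 T₀ with hT
    have h0T₀ : (0:G) ∉ T₀ := fun h => h0 (hT₀B h)
    have hTcard : T.card = T₀.card + 1 := card_insert_of_notMem h0T₀
    have hST : S + T ⊆ A := by
      intro x hx
      obtain ⟨u, hu, v, hv, rfl⟩ := Finset.mem_add.1 hx
      rcases mem_insert.1 hv with rfl | hv
      · simpa using hSA hu
      · exact hgood v hv u hu
    have hkey := key_cd T.card T S le_rfl (mem_insert_self 0 T₀)
      ⟨_, mem_image.2 ⟨hs.choose, hs.choose_spec, rfl⟩⟩
      (fun x hx hxne => hgen x (hT₀B ((mem_insert.1 hx).resolve_left hxne)))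
    have h1 : (S + T).card ≤ A.card := card_le_card hST
    have h2 : S.card + T.card - 1 ≤ A.card := by
      rcases min_le_iff.1 hkey with h | h
      · omega
      · omega
    have hT₀card : T₀.card = B.card - N.card := card_sdiff_of_subset hNB
    have hNle : N.card ≤ B.card := card_le_card hNB
    have hNpos : T₀.card + N.card = B.card := by omega
    omega
  obtain ⟨f₀, hf₀inj, hf₀mem⟩ := (Finset.all_card_le_biUnion_card_iff_exists_injective t).1 hall
  set f : G → G := fun x => if h : x ∈ A then f₀ ⟨x, h⟩ else 0 with hf
  have hfa : ∀ (x : G) (h : x ∈ A), f x = f₀ ⟨x, h⟩ := fun x h => dif_pos h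
  have hmem : ∀ (x : G) (h : x ∈ A), f x ∈ B ∧ x + f x ∉ A := by
    intro x h
    have := hf₀mem ⟨x, h⟩
    rw [ht, mem_filter] at this
    exact ⟨(hfa x h) ▸ this.1, (hfa x h) ▸ this.2⟩
  have hinj : Set.InjOn f (A : Set G) := by
    intro x hx y hy hxy
    rw [hfa x hx, hfa y hy] at hxy
    exact congrArg Subtype.val (hf₀inj hxy)
  have himg : A.image f = B := by
    apply eq_of_subset_of_card_le
    · intro b hb
      obtain ⟨x, hx, rfl⟩ := mem_image.1 hb
      exact (hmem x hx).1
    · rw [card_image_of_injOn (by simpa using hinj)]; omega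
  refine ⟨f, ⟨⟨fun x hx => (hmem x hx).1, hinj, ?_⟩, fun a ha => (hmem a ha).2⟩⟩
  · intro b hb
    obtain ⟨x, hx, rfl⟩ := mem_image.1 (himg ▸ (by exact_mod_cast hb : b ∈ B))
    exact ⟨x, by exact_mod_cast hx, rfl⟩
end

section
/- Let K ⊂ L be a field extension in which every element of L algebraic over K is separable over K. If the extension K ⊂ L has the linear local matching property, then it has the linear matching property. -/
/-- `a : Fin n → L` is a basis of the `K`-subspace `A` of `L`. -/
def IsBasisOfSubspace {K L : Type*} [Field K] [Field L] [Algebra K L]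
    (n : ℕ) (A : Submodule K L) (a : Fin n → L) : Prop :=
  LinearIndependent K a ∧ Submodule.span K (Set.range a) = A

/-- The basis `a` of `A` is matched to the basis `b` of `B`:
for all `x ∈ B` and all `i`, `a i * x ∈ A` implies that `x` lies in the hyperplane of `B`
spanned by the `b j`, `j ≠ i`. -/
def FamMatched {K L : Type*} [Field K] [Field L] [Algebra K L]
    (A B : Submodule K L) {n : ℕ} (a b : Fin n → L) : Prop :=
  ∀ x ∈ B, ∀ i : Fin n, a i * x ∈ A → x ∈ Submodule.span K (b '' ({i}ᶜ : Set (Fin n)))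

/-- `A` is matched to `B`: every basis of `A` can be matched to a basis of `B`. -/
def SubspaceMatched {K L : Type*} [Field K] [Field L] [Algebra K L]
    (A B : Submodule K L) : Prop :=
  ∀ (n : ℕ) (a : Fin n → L), IsBasisOfSubspace n A a →
    ∃ b : Fin n → L, IsBasisOfSubspace n B b ∧ FamMatched A B a b

/-- `Ã` is `A`-matched to `B̃`: for every basis of `Ã` one can find a basis of `B̃`
with `aᵢ * bᵢ ∉ A` for all `i`. -/
def AMatched {K L : Type*} [Field K] [Field L] [Algebra K L]
    (A Atil Btil : Submodule K L) : Prop :=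
  ∀ (n : ℕ) (a : Fin n → L), IsBasisOfSubspace n Atil a →
    ∃ b : Fin n → L, IsBasisOfSubspace n Btil b ∧ ∀ i, a i * b i ∉ A

/-- `A` is locally matched to `B`: for every intermediate field `K ⊆ H ⊊ L` with
`H ∩ B ≠ {0}` and `aH ⊆ A` for some `a ∈ A`, some non-zero subspace `Ã` of `A`
is `A`-matched to `H ∩ B`. -/
def SubspaceLocallyMatched {K L : Type*} [Field K] [Field L] [Algebra K L]
    (A B : Submodule K L) : Prop :=
  ∀ H : IntermediateField K L, H ≠ ⊤ →
    Subalgebra.toSubmodule H.toSubalgebra ⊓ B ≠ ⊥ →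
    (∃ a ∈ A, ∀ h ∈ H, a * h ∈ A) →
    ∃ Atil : Submodule K L, Atil ≤ A ∧ Atil ≠ ⊥ ∧
      AMatched A Atil (Subalgebra.toSubmodule H.toSubalgebra ⊓ B)

/-- `K ⊂ L` has the linear matching property: for every `n ≥ 1` and all `n`-dimensional
`K`-subspaces `A, B` of `L` with `1 ∉ B`, `A` is matched to `B`. -/
def LinearMatchingProperty (K L : Type*) [Field K] [Field L] [Algebra K L] : Prop :=
  ∀ (n : ℕ), 1 ≤ n → ∀ A B : Submodule K L,
    Module.finrank K A = n → Module.finrank K B = n → (1 : L) ∉ B →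
      SubspaceMatched A B

/-- `K ⊂ L` has the linear local matching property: for every `n ≥ 1` and all
`n`-dimensional `K`-subspaces `A, B` of `L` with `1 ∉ B`, `A` is locally matched to `B`. -/
def LinearLocalMatchingProperty (K L : Type*) [Field K] [Field L] [Algebra K L] : Prop :=
  ∀ (n : ℕ), 1 ≤ n → ∀ A B : Submodule K L,
    Module.finrank K A = n → Module.finrank K B = n → (1 : L) ∉ B →
      SubspaceLocallyMatched A B

/-!
Local matching rules out intermediate fields `K ⊊ H ⊊ L` of finite degree: for such `H` take
`A = H` and a subspace `B` of the same dimension with `1 ∉ B` and `H ∩ B ≠ 0`; every subspace of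
`A` multiplies `H ∩ B` back into `A`, so none is `A`-matched to `H ∩ B`.

Without such intermediate fields the linear Cauchy–Davenport inequality
`dim U + dim V ≤ dim UV + 1` holds whenever `UV ≠ L`. Given a basis `a` of `A`, let
`S i = {x ∈ B | a i * x ∈ A}`. Applied to `U = span {a j | j ∈ J}` and `V = K ⊕ ⋂_{j ∈ J} S j`
(note `UV ⊆ A`) the inequality gives `dim ⋂_{j ∈ J} S j ≤ n - |J|`. This is Rado's condition for
the annihilators of the `S i` in the dual of `B`, so Rado's theorem yields independent functionals
`φ i` vanishing on `S i`, and the basis of `B` dual to `φ` is matched to `a`.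
-/

open Module Submodule

theorem biSup_update_of_notMem {ι α : Type*} [CompleteLattice α] [DecidableEq ι] (f : ι → α)
    {i : ι} (a : α) {J : Finset ι} (hi : i ∉ J) :
    ⨆ j ∈ J, Function.update f i a j = ⨆ j ∈ J, f j :=
  iSup_congr fun j => iSup_congr fun hj => by
    rw [Function.update_of_ne (ne_of_mem_of_not_mem hj hi)]

theorem biSup_update_of_mem {ι α : Type*} [CompleteLattice α] [DecidableEq ι] (f : ι → α)
    {i : ι} (a : α) {J : Finset ι} (hi : i ∈ J) :
    ⨆ j ∈ J, Function.update f i a j = a ⊔ ⨆ j ∈ J.erase i, f j := by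
  conv_lhs => rw [← Finset.insert_erase hi]
  rw [Finset.iSup_insert, Function.update_self,
    biSup_update_of_notMem _ _ (Finset.notMem_erase i J)]

section Rado

variable {K W ι : Type*} [Field K] [AddCommGroup W] [Module K W]

def RadoCondition (V : ι → Submodule K W) : Prop :=
  ∀ J : Finset ι, J.card ≤ finrank K ↥(⨆ j ∈ J, V j)

theorem Submodule.exists_sup_eq_of_two_le_finrank (V : Submodule K W) [FiniteDimensional K V]
    (hV : 2 ≤ finrank K V) :
    ∃ V₁ V₂ : Submodule K W, V₁ ⊔ V₂ = V ∧ finrank K V₁ < finrank K V ∧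
      finrank K V₂ < finrank K V := by
  obtain ⟨v, hv, hv0⟩ := V.exists_mem_ne_zero_of_ne_bot fun h => by
    rw [← finrank_eq_zero] at h; omega
  obtain ⟨f, hf⟩ : ∃ f : Dual K W, f v ≠ 0 := by
    by_contra! h
    exact hv0 ((forall_dual_apply_eq_zero_iff K v).mp h)
  refine ⟨V ⊓ LinearMap.ker f, K ∙ v, le_antisymm (sup_le inf_le_left
    ((span_singleton_le_iff_mem v V).mpr hv)) fun w hw => ?_, ?_, ?_⟩
  · have hw' : w - (f w / f v) • v ∈ V ⊓ LinearMap.ker f := by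
      refine ⟨sub_mem hw (smul_mem _ _ hv), ?_⟩
      simp [div_mul_cancel₀ _ hf]
    exact mem_sup.mpr ⟨_, hw', _, smul_mem _ _ (mem_span_singleton_self v), sub_add_cancel w _⟩
  · exact finrank_lt_finrank_of_lt (lt_of_le_of_ne inf_le_left fun h => hf (h.ge hv).2)
  · rw [finrank_span_singleton hv0]
    omega

variable [FiniteDimensional K W]

/-- If both updated families violate the condition, on sets `J₁ ∋ i` and `J₂ ∋ i`, then
submodularity of `finrank` applied to the two violating spans contradicts the condition for
`J₁ ∪ J₂` and `J₁ ∩ J₂ \ {i}`. -/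
theorem RadoCondition.update_or_update [DecidableEq ι] {V : ι → Submodule K W}
    (hV : RadoCondition V) {i : ι} {V₁ V₂ : Submodule K W} (h : V₁ ⊔ V₂ = V i) :
    RadoCondition (Function.update V i V₁) ∨ RadoCondition (Function.update V i V₂) := by
  by_contra! hcon
  simp only [RadoCondition, not_forall, not_le] at hcon
  obtain ⟨⟨J₁, hJ₁⟩, ⟨J₂, hJ₂⟩⟩ := hcon
  have hi₁ : i ∈ J₁ := by
    by_contra hi
    rw [biSup_update_of_notMem _ _ hi] at hJ₁
    exact (hV J₁).not_gt hJ₁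
  have hi₂ : i ∈ J₂ := by
    by_contra hi
    rw [biSup_update_of_notMem _ _ hi] at hJ₂
    exact (hV J₂).not_gt hJ₂
  rw [biSup_update_of_mem _ _ hi₁, ← Finset.card_erase_add_one hi₁] at hJ₁
  rw [biSup_update_of_mem _ _ hi₂, ← Finset.card_erase_add_one hi₂] at hJ₂
  set I₁ := J₁.erase i
  set I₂ := J₂.erase i
  set X := V₁ ⊔ ⨆ j ∈ I₁, V j
  set Y := V₂ ⊔ ⨆ j ∈ I₂, V j
  have hsup : X ⊔ Y = ⨆ j ∈ insert i (I₁ ∪ I₂), V j := by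
    rw [Finset.iSup_insert, Finset.iSup_union, sup_sup_sup_comm, h]
  have hinf : ⨆ j ∈ I₁ ∩ I₂, V j ≤ X ⊓ Y :=
    le_inf (le_sup_of_le_right (biSup_mono fun _ hj => (Finset.mem_inter.mp hj).1))
      (le_sup_of_le_right (biSup_mono fun _ hj => (Finset.mem_inter.mp hj).2))
  have hsup_rank := hV (insert i (I₁ ∪ I₂))
  rw [Finset.card_insert_of_notMem (by simp [I₁, I₂]), ← hsup] at hsup_rank
  have hinf_rank := (hV (I₁ ∩ I₂)).trans (Submodule.finrank_mono hinf)
  have := Submodule.finrank_sup_add_finrank_inf_eq X Y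
  have := Finset.card_union_add_card_inter I₁ I₂
  omega

theorem RadoCondition.linearIndependent [Fintype ι] {V : ι → Submodule K W}
    (hV : RadoCondition V) {v : ι → W} (hv : ∀ i, V i ≤ K ∙ v i) : LinearIndependent K v := by
  have hle : ⨆ i, V i ≤ span K (Set.range v) :=
    iSup_le fun i => (hv i).trans (span_mono (Set.singleton_subset_iff.mpr ⟨i, rfl⟩))
  have hcard := (hV Finset.univ).trans (finrank_mono (by simpa using hle))
  rw [linearIndependent_iff_card_eq_finrank_span]
  exact le_antisymm (by simpa [Set.finrank] using hcard) (finrank_range_le_card v)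

/-- Induction on `∑ i, dim V i`: a member of dimension at least two is split into two smaller
subspaces, one of which can replace it without breaking Rado's condition. -/
theorem RadoCondition.exists_linearIndependent [Fintype ι] {V : ι → Submodule K W}
    (hV : RadoCondition V) : ∃ v : ι → W, (∀ i, v i ∈ V i) ∧ LinearIndependent K v := by
  classical
  induction hN : ∑ i, finrank K (V i) using Nat.strong_induction_on generalizing V with
  | _ N ih =>
  by_cases hbig : ∃ i, 2 ≤ finrank K (V i)
  · obtain ⟨i, hi⟩ := hbig
    obtain ⟨V₁, V₂, hsup, hV₁, hV₂⟩ := (V i).exists_sup_eq_of_two_le_finrank hi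
    have hreplace : ∀ U, U ≤ V i → finrank K U < finrank K (V i) →
        RadoCondition (Function.update V i U) →
        ∃ v : ι → W, (∀ i, v i ∈ V i) ∧ LinearIndependent K v := by
      intro U hU hUrank hUV
      have hle : ∀ j, Function.update V i U j ≤ V j := fun j => by
        rcases eq_or_ne j i with rfl | hj
        · simpa using hU
        · simp [Function.update_of_ne hj]
      have hlt : ∑ j, finrank K (Function.update V i U j) < N := hN ▸
        Finset.sum_lt_sum (fun j _ => finrank_mono (hle j))
          ⟨i, Finset.mem_univ i, by rwa [Function.update_self]⟩
      obtain ⟨v, hv, hind⟩ := ih _ hlt hUV rfl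
      exact ⟨v, fun j => hle j (hv j), hind⟩
    rcases hV.update_or_update hsup with h | h
    · exact hreplace V₁ (hsup ▸ le_sup_left) hV₁ h
    · exact hreplace V₂ (hsup ▸ le_sup_right) hV₂ h
  · push Not at hbig
    have hne : ∀ i, V i ≠ ⊥ := fun i h => by simpa [h] using hV {i}
    choose v hv hv0 using fun i => (V i).exists_mem_ne_zero_of_ne_bot (hne i)
    refine ⟨v, hv, hV.linearIndependent fun i => ?_⟩
    refine (eq_of_le_of_finrank_le ((span_singleton_le_iff_mem _ _).mpr (hv i)) ?_).ge
    rw [finrank_span_singleton (hv0 i)]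
    exact Nat.le_of_lt_succ (hbig i)

theorem radoCondition_dualAnnihilator [Fintype ι] {S : ι → Submodule K W}
    (hS : ∀ J : Finset ι, finrank K ↥(⨅ j ∈ J, S j) + J.card ≤ finrank K W) :
    RadoCondition fun i => (S i).dualAnnihilator := by
  intro J
  have hann : ⨆ j ∈ J, (S j).dualAnnihilator = (⨅ j ∈ J, S j).dualAnnihilator := by
    rw [iSup_subtype', iInf_subtype']
    exact (Subspace.dualAnnihilator_iInf_eq fun j : J => S j).symm
  have := Subspace.finrank_add_finrank_dualAnnihilator_eq (⨅ j ∈ J, S j)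
  have := hS J
  rw [hann]
  omega

/-- `b` is the predual basis of independent functionals `φ i ∈ (S i)ᗮ`, given by Rado's theorem. -/
theorem exists_basis_le_span_image_compl [Fintype ι] (S : ι → Submodule K W)
    (hcard : Fintype.card ι = finrank K W)
    (hS : ∀ J : Finset ι, finrank K ↥(⨅ j ∈ J, S j) + J.card ≤ finrank K W) :
    ∃ b : Basis ι K W, ∀ i, S i ≤ span K (b '' {i}ᶜ) := by
  classical
  obtain ⟨φ, hφS, hφ⟩ := (radoCondition_dualAnnihilator hS).exists_linearIndependent
  let Φ := basisOfLinearIndependentOfCardEqFinrank' φ hφ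
    (hcard.trans Subspace.dual_finrank_eq.symm)
  let b := Φ.dualBasis.map (evalEquiv K W).symm
  have hrepr : ∀ x i, b.repr x i = φ i x := fun x i => by
    simp [b, Φ, Basis.dualBasis_repr]
  refine ⟨b, fun i x hx => b.mem_span_image.mpr fun j hj => ?_⟩
  rintro rfl
  rw [Finset.mem_coe, Finsupp.mem_support_iff, hrepr] at hj
  exact hj ((mem_dualAnnihilator _).mp (hφS j) x hx)

end Rado

theorem Submodule.ne_top_of_finrank_eq {K W : Type*} [Field K] [AddCommGroup W] [Module K W]
    {A B : Submodule K W} [FiniteDimensional K A] (h : finrank K A = finrank K B) (hB : B ≠ ⊤) :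
    A ≠ ⊤ := by
  rintro rfl
  have : FiniteDimensional K W := Module.Finite.equiv (topEquiv (R := K) (M := W))
  exact hB (eq_top_of_finrank_eq (h.symm.trans (finrank_top K W)))

theorem Submodule.finrank_sup_map_add_finrank_inf_comap {K W : Type*} [Field K]
    [AddCommGroup W] [Module K W] (e : W ≃ₗ[K] W) (U V : Submodule K W) [FiniteDimensional K U]
    [FiniteDimensional K V] :
    finrank K ↥(U ⊔ V.map (e : W →ₗ[K] W)) + finrank K ↥(V ⊓ U.comap (e : W →ₗ[K] W)) =
      finrank K U + finrank K V := by
  have hmap : (V ⊓ U.comap (e : W →ₗ[K] W)).map (e : W →ₗ[K] W) = U ⊓ V.map (e : W →ₗ[K] W) := by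
    rw [map_inf _ e.injective, map_comap_eq_of_surjective e.surjective, inf_comm]
  rw [← e.finrank_map_eq (V ⊓ U.comap (e : W →ₗ[K] W)), hmap, finrank_sup_add_finrank_inf_eq,
    e.finrank_map_eq]

section Field
variable {K L : Type*} [Field K] [Field L] [Algebra K L]

theorem isBasisOfSubspace_coe_basis {n : ℕ} (P : Submodule K L) (b : Basis (Fin n) K P) :
    IsBasisOfSubspace n P fun i => (b i : L) := by
  refine ⟨b.linearIndependent.map' P.subtype P.ker_subtype, ?_⟩
  rw [show Set.range (fun i => (b i : L)) = P.subtype '' Set.range b from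
    Set.range_comp _ _, span_image, b.span_eq, Submodule.map_top, range_subtype]

theorem IsBasisOfSubspace.finrank_eq {n : ℕ} {A : Submodule K L} {a : Fin n → L}
    (ha : IsBasisOfSubspace n A a) : finrank K A = n := by
  rw [← ha.2, finrank_span_eq_card ha.1, Fintype.card_fin]

theorem exists_isBasisOfSubspace_le_span_image_compl {m : ℕ} (B : Submodule K L)
    [FiniteDimensional K B] (hB : finrank K B = m) (S : Fin m → Submodule K L)
    (hSB : ∀ i, S i ≤ B)
    (hS : ∀ J : Finset (Fin m), J.Nonempty → finrank K ↥(⨅ j ∈ J, S j) + J.card ≤ m) :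
    ∃ b : Fin m → L, IsBasisOfSubspace m B b ∧ ∀ i, S i ≤ span K (b '' {i}ᶜ) := by
  obtain ⟨b, hb⟩ := exists_basis_le_span_image_compl (fun i => (S i).comap B.subtype)
    (by simp [hB]) fun J => by
      rcases J.eq_empty_or_nonempty with rfl | hJ
      · simpa using finrank_le _
      obtain ⟨j, hj⟩ := hJ
      have hle : ⨅ j ∈ J, S j ≤ B := (biInf_le _ hj).trans (hSB j)
      have hcomap : ⨅ j ∈ J, (S j).comap B.subtype = (⨅ j ∈ J, S j).comap B.subtype := by
        simp only [comap_iInf]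
      rw [hcomap, (comapSubtypeEquivOfLe hle).finrank_eq, hB]
      exact hS J ⟨j, hj⟩
  refine ⟨fun i => b i, isBasisOfSubspace_coe_basis B b, fun i x hx => ?_⟩
  have := mem_map_of_mem (f := B.subtype) (hb i (show ⟨x, hSB i hx⟩ ∈ (S i).comap B.subtype
    from hx))
  rwa [map_span, ← Set.image_comp] at this

instance Submodule.finiteDimensional_mul (U V : Submodule K L) [FiniteDimensional K U]
    [FiniteDimensional K V] : FiniteDimensional K ↥(U * V) :=
  (fg_iff_finiteDimensional _).mp
    (((fg_iff_finiteDimensional U).mpr ‹_›).mul ((fg_iff_finiteDimensional V).mpr ‹_›))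

/-- Closed under inverses because multiplication by a nonzero `y` is injective, hence bijective,
on the finite-dimensional `U`. -/
def Submodule.mulStabilizer (U : Submodule K L) [FiniteDimensional K U] :
    IntermediateField K L :=
  Subalgebra.toIntermediateField
    { carrier := {y | ∀ u ∈ U, u * y ∈ U}
      mul_mem' := fun ha hb u hu => mul_assoc u _ _ ▸ hb _ (ha u hu)
      add_mem' := fun ha hb u hu => (mul_add u _ _).symm ▸ U.add_mem (ha u hu) (hb u hu)
      algebraMap_mem' := fun c u hu => by
        rw [mul_comm, ← Algebra.smul_def]
        exact U.smul_mem c hu }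
    fun y hy u hu => by
      rcases eq_or_ne y 0 with rfl | hy0
      · simp
      let g : U →ₗ[K] U := (LinearMap.mulRight K y).restrict hy
      have hg : Function.Injective g := fun a b hab =>
        Subtype.ext (mul_right_cancel₀ hy0 (congrArg Subtype.val hab))
      obtain ⟨w, hw⟩ := LinearMap.injective_iff_surjective.mp hg ⟨u, hu⟩
      have hw : (w : L) * y = u := congrArg Subtype.val hw
      rw [← hw, mul_assoc, mul_inv_cancel₀ hy0, mul_one]
      exact w.2

theorem Submodule.finiteDimensional_mulStabilizer {U : Submodule K L} [FiniteDimensional K U]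
    (hU : U ≠ ⊥) : FiniteDimensional K U.mulStabilizer := by
  obtain ⟨u, hu, hu0⟩ := U.exists_mem_ne_zero_of_ne_bot hU
  let f : U.mulStabilizer →ₗ[K] U :=
    { toFun := fun y => ⟨u * y, y.2 u hu⟩
      map_add' := fun a b => Subtype.ext (mul_add u a b)
      map_smul' := fun c a => Subtype.ext (mul_smul_comm c u (a : L)) }
  exact .of_injective f fun a b hab =>
    Subtype.ext (mul_left_cancel₀ hu0 (congrArg Subtype.val hab))

theorem Submodule.mulStabilizer_ne_top {U : Submodule K L} [FiniteDimensional K U]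
    (hU : U ≠ ⊥) (hU' : U ≠ ⊤) : U.mulStabilizer ≠ ⊤ := by
  obtain ⟨u, hu, hu0⟩ := U.exists_mem_ne_zero_of_ne_bot hU
  refine fun h => hU' (eq_top_iff.mpr fun z _ => ?_)
  have := (h ▸ IntermediateField.mem_top : u⁻¹ * z ∈ U.mulStabilizer) u hu
  rwa [← mul_assoc, mul_inv_cancel₀ hu0, one_mul] at this

theorem Submodule.mul_ne_top_left {U V : Submodule K L} (hV : V ≠ ⊥) (hUV : U * V ≠ ⊤) :
    U ≠ ⊤ := by
  obtain ⟨v, hv, hv0⟩ := V.exists_mem_ne_zero_of_ne_bot hV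
  rintro rfl
  refine hUV (eq_top_iff.mpr fun z _ => ?_)
  simpa [hv0] using mul_mem_mul (mem_top : z * v⁻¹ ∈ ⊤) hv

def HasNoProperFiniteSubextension (K L : Type*) [Field K] [Field L] [Algebra K L] : Prop :=
  ∀ H : IntermediateField K L, FiniteDimensional K H → H ≠ ⊤ → H = ⊥

theorem Submodule.finrank_le_finrank_mul (U : Submodule K L) {V : Submodule K L}
    [FiniteDimensional K U] [FiniteDimensional K V] (hV : V ≠ ⊥) :
    finrank K U ≤ finrank K ↥(U * V) := by
  obtain ⟨v, hv, hv0⟩ := V.exists_mem_ne_zero_of_ne_bot hV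
  rw [← ((Units.mk0 v hv0).mulLeftLinearEquiv K L).finrank_map_eq U, mul_comm]
  exact finrank_mono (map_le_iff_le_comap.mpr fun u hu => mul_mem_mul hv hu)

theorem Submodule.sup_map_mul_inf_comap_le_mul (U V : Submodule K L) (x : L) :
    (U ⊔ V.map (LinearMap.mulLeft K x)) * (V ⊓ U.comap (LinearMap.mulLeft K x)) ≤ U * V := by
  refine mul_le.mpr fun y hy z hz => ?_
  obtain ⟨y, hyU, _, ⟨w, hw, rfl⟩, rfl⟩ := mem_sup.mp hy
  have hz' : x * z ∈ U := hz.2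
  rw [LinearMap.mulLeft_apply, show (y + x * w) * z = y * z + x * z * w by ring]
  exact add_mem (mul_mem_mul hyU hz.1) (mul_mem_mul hz' hw)

/-- For any nonzero `v₀ ∈ V`, `v₀⁻¹ V` lies in the stabilizer of `U`, which is `K`. -/
theorem HasNoProperFiniteSubextension.finrank_le_one_of_dyson_stable
    (hK : HasNoProperFiniteSubextension K L) {U V : Submodule K L} [FiniteDimensional K U]
    (hU : U ≠ ⊥) (hUV : U * V ≠ ⊤)
    (hstable : ∀ x ≠ 0, V ⊓ U.comap (LinearMap.mulLeft K x) ≠ ⊥ →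
      V ⊓ U.comap (LinearMap.mulLeft K x) = V) :
    finrank K V ≤ 1 := by
  rcases eq_or_ne V ⊥ with rfl | hV
  · simp
  obtain ⟨v₀, hv₀, hv₀0⟩ := V.exists_mem_ne_zero_of_ne_bot hV
  have hstab : ∀ v ∈ V, v₀⁻¹ * v ∈ U.mulStabilizer := fun v hv u hu => by
    rcases eq_or_ne u 0 with rfl | hu0
    · simp
    have hmem : v₀ ∈ V ⊓ U.comap (LinearMap.mulLeft K (u * v₀⁻¹)) :=
      ⟨hv₀, by simpa [hv₀0] using hu⟩
    have hV' := hstable _ (mul_ne_zero hu0 (inv_ne_zero hv₀0))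
      ((Submodule.ne_bot_iff _).mpr ⟨v₀, hmem, hv₀0⟩)
    simpa [mul_assoc] using (hV'.ge hv).2
  have hbot := hK _ (finiteDimensional_mulStabilizer hU)
    (mulStabilizer_ne_top hU (mul_ne_top_left hV hUV))
  have hle : V ≤ K ∙ v₀ := fun v hv => by
    obtain ⟨c, hc⟩ := IntermediateField.mem_bot.mp (hbot ▸ hstab v hv)
    refine mem_span_singleton.mpr ⟨c, ?_⟩
    rw [Algebra.smul_def, hc, mul_comm v₀⁻¹ v, mul_assoc, inv_mul_cancel₀ hv₀0, mul_one]
  simpa [finrank_span_singleton hv₀0] using finrank_mono hle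

/-- A linear analogue of the Cauchy–Davenport inequality, proved by induction on `dim V` using
the Dyson transform `(U, V) ↦ (U + xV, V ∩ x⁻¹U)`, which keeps `dim U + dim V` and shrinks `UV`. -/
theorem HasNoProperFiniteSubextension.finrank_add_finrank_le_finrank_mul_add_one
    (hK : HasNoProperFiniteSubextension K L) {U V : Submodule K L} [FiniteDimensional K U]
    [FiniteDimensional K V] (hU : U ≠ ⊥) (hV : V ≠ ⊥) (hUV : U * V ≠ ⊤) :
    finrank K U + finrank K V ≤ finrank K ↥(U * V) + 1 := by
  induction hN : finrank K V using Nat.strong_induction_on generalizing U V with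
  | _ N ih =>
  by_cases hdyson : ∃ x ≠ 0, V ⊓ U.comap (LinearMap.mulLeft K x) ≠ ⊥ ∧
      V ⊓ U.comap (LinearMap.mulLeft K x) ≠ V
  · obtain ⟨x, hx, hbot, hne⟩ := hdyson
    have hle := U.sup_map_mul_inf_comap_le_mul V x
    have hrank : finrank K ↥(U ⊔ V.map (LinearMap.mulLeft K x)) +
        finrank K ↥(V ⊓ U.comap (LinearMap.mulLeft K x)) = finrank K U + finrank K V :=
      finrank_sup_map_add_finrank_inf_comap ((Units.mk0 x hx).mulLeftLinearEquiv K L) U V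
    have hlt : finrank K ↥(V ⊓ U.comap (LinearMap.mulLeft K x)) < N :=
      hN ▸ finrank_lt_finrank_of_lt (lt_of_le_of_ne inf_le_left hne)
    have := ih _ hlt (fun h => hU (eq_bot_iff.mpr (h ▸ le_sup_left))) hbot
      (fun h => hUV (top_le_iff.mp (h ▸ hle))) rfl
    have := finrank_mono hle
    omega
  · push Not at hdyson
    have := hK.finrank_le_one_of_dyson_stable hU hUV hdyson
    have := Nat.pos_of_ne_zero (finrank_eq_zero.not.mpr hV)
    have := U.finrank_le_finrank_mul hV
    omega

theorem HasNoProperFiniteSubextension.finrank_add_finrank_le_of_mul_le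
    (hK : HasNoProperFiniteSubextension K L) {U T A : Submodule K L} [FiniteDimensional K U]
    [FiniteDimensional K T] [FiniteDimensional K A] (hU : U ≠ ⊥) (hT : (1 : L) ∉ T)
    (hA : A ≠ ⊤) (hUA : U ≤ A) (hUT : U * T ≤ A) :
    finrank K U + finrank K T ≤ finrank K A := by
  have hrank : finrank K ↥(T ⊔ K ∙ 1) = finrank K T + 1 := by
    have := finrank_sup_add_finrank_inf_eq T (K ∙ (1 : L))
    rw [((disjoint_span_singleton' one_ne_zero).mpr hT).eq_bot, finrank_bot,
      finrank_span_singleton one_ne_zero] at this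
    omega
  have hle : U * (T ⊔ K ∙ 1) ≤ A := by
    rw [Submodule.mul_sup, ← one_eq_span, mul_one]
    exact sup_le hUT hUA
  have hT1 : T ⊔ K ∙ 1 ≠ ⊥ := (Submodule.ne_bot_iff _).mpr
    ⟨1, mem_sup_right (mem_span_singleton_self 1), one_ne_zero⟩
  have := hK.finrank_add_finrank_le_finrank_mul_add_one hU hT1
    fun h => hA (top_le_iff.mp (h ▸ hle))
  have := finrank_mono hle
  omega

theorem HasNoProperFiniteSubextension.finrank_iInf_add_card_le
    (hK : HasNoProperFiniteSubextension K L) {A B : Submodule K L} [FiniteDimensional K A]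
    [FiniteDimensional K B] (hB : (1 : L) ∉ B) (hA : A ≠ ⊤) {m : ℕ} {a : Fin m → L}
    (ha : IsBasisOfSubspace m A a) {J : Finset (Fin m)} (hJ : J.Nonempty) :
    finrank K ↥(⨅ j ∈ J, B ⊓ A.comap (LinearMap.mulLeft K (a j))) + J.card ≤ m := by
  obtain ⟨j₀, hj₀⟩ := hJ
  set T := ⨅ j ∈ J, B ⊓ A.comap (LinearMap.mulLeft K (a j))
  have hTB : T ≤ B := (biInf_le _ hj₀).trans inf_le_left
  have : FiniteDimensional K T := finiteDimensional_of_le hTB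
  set U := span K (Set.range fun j : J => a j)
  have hUA : U ≤ A := span_le.mpr <| by
    rintro _ ⟨j, rfl⟩
    exact ha.2 ▸ subset_span ⟨j, rfl⟩
  have : FiniteDimensional K U := finiteDimensional_of_le hUA
  have hUrank : finrank K U = J.card :=
    (finrank_span_eq_card (ha.1.comp _ Subtype.val_injective)).trans (Fintype.card_coe J)
  have hU : U ≠ ⊥ := (Submodule.ne_bot_iff _).mpr
    ⟨a j₀, subset_span ⟨⟨j₀, hj₀⟩, rfl⟩, ha.1.ne_zero j₀⟩
  have hUT : U * T ≤ A := mul_le.mpr fun u hu t ht => by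
    have hUt : U ≤ A.comap (LinearMap.mulRight K t) := span_le.mpr <| by
      rintro _ ⟨j, rfl⟩
      exact ((mem_iInf _).mp ((mem_iInf _).mp ht j) j.2).2
    exact hUt hu
  have := hK.finrank_add_finrank_le_of_mul_le hU (fun h => hB (hTB h)) hA hUA hUT
  rw [ha.finrank_eq] at this
  omega

theorem HasNoProperFiniteSubextension.subspaceMatched (hK : HasNoProperFiniteSubextension K L)
    {A B : Submodule K L} [FiniteDimensional K A] [FiniteDimensional K B]
    (hAB : finrank K A = finrank K B) (hB : (1 : L) ∉ B) (hA : A ≠ ⊤) : SubspaceMatched A B := by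
  intro m a ha
  obtain ⟨b, hb, hS⟩ := exists_isBasisOfSubspace_le_span_image_compl B (hAB ▸ ha.finrank_eq) _
    (fun i => inf_le_left) fun J => hK.finrank_iInf_add_card_le hB hA ha
  exact ⟨b, hb, fun x hx i hi => hS i ⟨hx, hi⟩⟩

/-- Take `B = T(M)` with `T y = y + f(y) z`, where `z ∉ M` and `f` is a linear form with
`f 1 ≠ 0`: `T` is injective on `M`, `1 ∉ T(M)`, and `T` fixes the nonzero `f(1) x - f(x) ∈ M`. -/
theorem Submodule.exists_finrank_eq_one_notMem_inf_ne_bot (M : Submodule K L)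
    [FiniteDimensional K M] (hM : M ≠ ⊤) (h1 : (1 : L) ∈ M) {x : L} (hx : x ∈ M)
    (hind : LinearIndependent K ![1, x]) :
    ∃ B : Submodule K L, finrank K B = finrank K M ∧ (1 : L) ∉ B ∧ M ⊓ B ≠ ⊥ := by
  obtain ⟨z, -, hz⟩ := SetLike.exists_of_lt (lt_top_iff_ne_top.mpr hM)
  obtain ⟨f, hf⟩ : ∃ f : Dual K L, f 1 ≠ 0 := by
    by_contra! h
    exact one_ne_zero ((forall_dual_apply_eq_zero_iff K (1 : L)).mp h)
  let T : L →ₗ[K] L := LinearMap.id + f.smulRight z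
  have hT : ∀ y, T y = y + f y • z := fun _ => rfl
  have hfT : ∀ y ∈ M, T y ∈ M → f y = 0 := fun y hy hTy => by
    by_contra hfy
    refine hz ((M.smul_mem_iff hfy).mp ?_)
    simpa [hT] using sub_mem hTy hy
  have hinj : Function.Injective (T.domRestrict M) := by
    refine (injective_iff_map_eq_zero _).mpr fun ⟨y, hy⟩ h => ?_
    have hTy : T y = 0 := h
    have hfy := hfT y hy (hTy ▸ zero_mem M)
    simpa [hT, hfy] using hTy
  refine ⟨M.map T, ?_, ?_, ?_⟩
  · rw [← LinearMap.range_domRestrict, LinearMap.finrank_range_of_inj hinj]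
  · rintro ⟨y, hy, hTy⟩
    have hfy := hfT y hy (hTy ▸ h1)
    rw [hT, hfy, zero_smul, add_zero] at hTy
    exact hf (hTy ▸ hfy)
  · set y := f 1 • x - f x • 1 with hy
    have hyM : y ∈ M := sub_mem (smul_mem _ _ hx) (smul_mem _ _ h1)
    have hfy : f y = 0 := by simp [y, mul_comm]
    refine (Submodule.ne_bot_iff _).mpr ⟨y, ⟨hyM, y, hyM, by simp [hT, hfy]⟩, fun hy0 => ?_⟩
    refine hf (LinearIndependent.pair_iff.mp hind (-f x) (f 1) ?_).2
    rw [← hy0, hy, neg_smul, neg_add_eq_sub]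

theorem not_aMatched_of_mul_le {A Atil C : Submodule K L} [FiniteDimensional K Atil]
    (hAtil : Atil ≠ ⊥) (h : ∀ a ∈ Atil, ∀ c ∈ C, a * c ∈ A) : ¬ AMatched A Atil C := by
  intro hmatch
  obtain ⟨b, hb, hprod⟩ := hmatch _ _ (isBasisOfSubspace_coe_basis Atil (finBasis K Atil))
  have hpos : 0 < finrank K Atil := Nat.pos_of_ne_zero (finrank_eq_zero.not.mpr hAtil)
  exact hprod ⟨0, hpos⟩ (h _ (finBasis K Atil _).2 _ (hb.2 ▸ subset_span ⟨_, rfl⟩))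

theorem hasNoProperFiniteSubextension_of_linearLocalMatchingProperty
    (hloc : LinearLocalMatchingProperty K L) : HasNoProperFiniteSubextension K L := by
  intro H hfd hH
  by_contra hbot
  set M := Subalgebra.toSubmodule H.toSubalgebra
  have : FiniteDimensional K M := hfd
  obtain ⟨x, hxH, hxK⟩ := SetLike.exists_of_lt (bot_lt_iff_ne_bot.mpr hbot)
  have hind : LinearIndependent K ![1, x] :=
    (LinearIndependent.pair_iff' one_ne_zero).mpr fun c hc =>
      hxK (IntermediateField.mem_bot.mpr ⟨c, by rw [Algebra.algebraMap_eq_smul_one, hc]⟩)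
  have hM : M ≠ ⊤ := fun h => hH (eq_top_iff.mpr fun z _ => (h ▸ mem_top : z ∈ M))
  obtain ⟨B, hBM, hB1, hMB⟩ := M.exists_finrank_eq_one_notMem_inf_ne_bot hM H.one_mem hxH hind
  have hM0 : M ≠ ⊥ := (Submodule.ne_bot_iff _).mpr ⟨1, H.one_mem, one_ne_zero⟩
  have hpos : 1 ≤ finrank K M := Nat.pos_of_ne_zero (finrank_eq_zero.not.mpr hM0)
  obtain ⟨Atil, hle, hne, hmatch⟩ := hloc _ hpos M B rfl hBM hB1 H hH hMB
    ⟨0, zero_mem M, fun _ _ => by simp⟩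
  have : FiniteDimensional K Atil := finiteDimensional_of_le hle
  refine not_aMatched_of_mul_le hne (fun a ha c hc => ?_) hmatch
  exact H.mul_mem (hle ha) hc.1

end Field

theorem linear_local_matching_implies_linear_matching_general {K L : Type*} [Field K] [Field L]
    [Algebra K L] (hloc : LinearLocalMatchingProperty K L) :
    LinearMatchingProperty K L := by
  intro n hn A B hA hB h1B
  have : FiniteDimensional K A := .of_finrank_pos (by omega)
  have : FiniteDimensional K B := .of_finrank_pos (by omega)
  have hAB : finrank K A = finrank K B := hA.trans hB.symm
  exact (hasNoProperFiniteSubextension_of_linearLocalMatchingProperty hloc).subspaceMatched hAB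
    h1B (ne_top_of_finrank_eq hAB fun h => h1B (h ▸ mem_top))

/-- If every element of `L` algebraic over `K` is separable over `K` and `K ⊂ L` has the
linear local matching property, then it has the linear matching property. -/
theorem linear_local_matching_implies_linear_matching {K L : Type*} [Field K] [Field L]
    [Algebra K L] (hsep : ∀ x : L, IsAlgebraic K x → IsSeparable K x)
    (hloc : LinearLocalMatchingProperty K L) :
    LinearMatchingProperty K L :=
  linear_local_matching_implies_linear_matching_general hloc
end

section
/- Let K ⊂ L be a field extension and let A and B be two n-dimensional K-subspaces of L with 1 ∉ B. If there is a strong matching from A to B, then A is locally matched to B. -/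
/-- A `K`-linear isomorphism `φ : A → B` is a strong matching if every basis of `A`
is matched to its image basis under `φ`. -/
def IsStrongMatching {K L : Type*} [Field K] [Field L] [Algebra K L]
    (A B : Submodule K L) (φ : A ≃ₗ[K] B) : Prop :=
  ∀ (n : ℕ) (v : Module.Basis (Fin n) K A),
    FamMatched A B (fun i => (v i : L)) (fun i => (φ (v i) : L))

/-!
A strong matching `φ` forbids `a * x ∈ A` for all non-zero `a ∈ A`, `x ∈ B`: choose a basis of
`A` starting with `a` whose remaining vectors span a hyperplane missing `φ⁻¹ x`; matching that
basis with its image forces `x` into the image of this hyperplane. Hence any subspace of `A` with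
the same dimension as `H ∩ B`, e.g. `φ⁻¹ (H ∩ B)`, is `A`-matched to `H ∩ B`, whatever bases are
chosen. When `A` is infinite-dimensional, `A` itself is a witness, as `AMatched` only speaks of
finite bases.
-/

open Module Submodule

theorem Module.exists_dual_apply_ne_zero_and_ne_zero {K V : Type*} [DivisionRing K] [AddCommGroup V]
    [Module K V] {a w : V} (ha : a ≠ 0) (hw : w ≠ 0) : ∃ f : Dual K V, f a ≠ 0 ∧ f w ≠ 0 := by
  obtain ⟨f, hfa⟩ := Projective.exists_dual_ne_zero K ha
  obtain ⟨g, hgw⟩ := Projective.exists_dual_ne_zero K hw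
  by_cases hfw : f w = 0
  · by_cases hga : g a = 0
    · exact ⟨f + g, by simpa [hga], by simpa [hfw]⟩
    · exact ⟨g, hga, hgw⟩
  · exact ⟨f, hfa, hfw⟩

theorem Module.Dual.exists_basis_cons_mem_ker {K V : Type*} [DivisionRing K] [AddCommGroup V]
    [Module K V] [FiniteDimensional K V] (f : Dual K V) {a : V} (ha : f a ≠ 0) :
    ∃ (k : ℕ) (v : Basis (Fin (k + 1)) K V), v 0 = a ∧ ∀ i : Fin k, v i.succ ∈ LinearMap.ker f := by
  have hli : ∀ c : K, ∀ x ∈ LinearMap.ker f, c • a + x = 0 → c = 0 := fun c x hx hcx => by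
    simpa [LinearMap.mem_ker.1 hx, ha] using congr_arg f hcx
  have hsp : ∀ z : V, ∃ c : K, z + c • a ∈ LinearMap.ker f := fun z =>
    ⟨-(f z / f a), by simp [ha]⟩
  exact ⟨_, Basis.mkFinCons a (finBasis K (LinearMap.ker f)) hli hsp, by simp, by simp⟩

theorem IsStrongMatching.mul_notMem {K L : Type*} [Field K] [Field L] [Algebra K L]
    {A B : Submodule K L} [FiniteDimensional K A] {φ : A ≃ₗ[K] B}
    (hφ : IsStrongMatching A B φ) {a x : L} (ha : a ∈ A) (ha0 : a ≠ 0)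
    (hx : x ∈ B) (hx0 : x ≠ 0) : a * x ∉ A := by
  intro hax
  let ψ : A →ₗ[K] L := B.subtype ∘ₗ φ.toLinearMap
  have hψ : Function.Injective ψ := B.injective_subtype.comp φ.injective
  set w : A := φ.symm ⟨x, hx⟩
  obtain ⟨f, hfa, hfw⟩ :=
    exists_dual_apply_ne_zero_and_ne_zero (K := K) (a := (⟨a, ha⟩ : A)) (w := w) (by simpa)
      (by simpa [w])
  obtain ⟨k, v, hv0, hvker⟩ := f.exists_basis_cons_mem_ker hfa
  have hw : ψ w ∈ span K (ψ '' (v '' {0}ᶜ)) := by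
    have := hφ _ v x hx 0 (by simpa [hv0])
    simpa [ψ, w, ← Set.image_comp] using this
  rw [apply_mem_span_image_iff_mem_span hψ] at hw
  have hker : span K (v '' {0}ᶜ) ≤ LinearMap.ker f := span_le.2 <| by
    rintro _ ⟨i, hi, rfl⟩
    obtain ⟨j, rfl⟩ := Fin.eq_succ_of_ne_zero hi
    exact hvker j
  exact hfw (hker hw)

theorem LinearEquiv.exists_le_finrank_eq {R M : Type*} [Semiring R] [AddCommMonoid M] [Module R M]
    {A B : Submodule R M} (φ : A ≃ₗ[R] B) {B' : Submodule R M} (hB' : B' ≤ B) :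
    ∃ A' ≤ A, finrank R A' = finrank R B' := by
  refine ⟨((B'.comap B.subtype).map φ.symm.toLinearMap).map A.subtype, map_subtype_le _ _, ?_⟩
  rw [finrank_map_subtype_eq, φ.symm.finrank_map_eq, ← finrank_map_subtype_eq,
    map_comap_subtype, inf_of_le_right hB']

section AMatched

variable {K L : Type*} [Field K] [Field L] [Algebra K L] {A A' B' : Submodule K L}

theorem AMatched.of_finrank_eq [FiniteDimensional K B'] (hrank : finrank K A' = finrank K B')
    (hmul : ∀ a ∈ A', a ≠ 0 → ∀ b ∈ B', b ≠ 0 → a * b ∉ A) : AMatched A A' B' := by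
  rintro m a ⟨hli, hspan⟩
  have hm : finrank K B' = m := by
    rw [← hrank, ← hspan, finrank_span_eq_card hli, Fintype.card_fin]
  let b := finBasisOfFinrankEq K B' hm
  refine ⟨B'.subtype ∘ b, ⟨b.linearIndependent.map' B'.subtype B'.ker_subtype, ?_⟩, fun i => ?_⟩
  · rw [Set.range_comp, span_image, b.span_eq, map_subtype_top]
  · exact hmul _ (hspan ▸ subset_span (Set.mem_range_self i)) (hli.ne_zero i) _ (b i).2
      (by simpa using b.ne_zero i)

theorem AMatched.of_not_finiteDimensional (hA' : ¬FiniteDimensional K A') : AMatched A A' B' := by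
  rintro m a ⟨-, hspan⟩
  exact absurd (hspan ▸ FiniteDimensional.span_of_finite K (Set.finite_range a)) hA'

end AMatched

theorem locally_matched_of_strong_matching_general {K L : Type*} [Field K] [Field L] [Algebra K L]
    (A B : Submodule K L)
    (h : ∃ φ : A ≃ₗ[K] B, IsStrongMatching A B φ) :
    SubspaceLocallyMatched A B := by
  obtain ⟨φ, hφ⟩ := h
  intro H _ hHB _
  set B' := Subalgebra.toSubmodule H.toSubalgebra ⊓ B
  by_cases hA : FiniteDimensional K A
  · have : FiniteDimensional K B := Module.Finite.equiv φ
    have : FiniteDimensional K B' := Submodule.finiteDimensional_of_le inf_le_right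
    obtain ⟨A', hA'A, hrank⟩ := φ.exists_le_finrank_eq (inf_le_right : B' ≤ B)
    refine ⟨A', hA'A, fun hA' => hHB ?_, AMatched.of_finrank_eq hrank fun a ha ha0 b hb hb0 =>
      hφ.mul_notMem (hA'A ha) ha0 (mem_inf.1 hb).2 hb0⟩
    rw [← Submodule.finrank_eq_zero, ← hrank, hA', finrank_bot]
  · exact ⟨A, le_rfl, fun hA' => hA (hA' ▸ inferInstance), AMatched.of_not_finiteDimensional hA⟩

/-- If `A` and `B` are `n`-dimensional `K`-subspaces of `L` with `1 ∉ B` and there is a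
strong matching from `A` to `B`, then `A` is locally matched to `B`. -/
theorem locally_matched_of_strong_matching {K L : Type*} [Field K] [Field L] [Algebra K L]
    (n : ℕ) (A B : Submodule K L)
    (hA : Module.finrank K A = n) (hB : Module.finrank K B = n)
    (h1 : (1 : L) ∉ B) (h : ∃ φ : A ≃ₗ[K] B, IsStrongMatching A B φ) :
    SubspaceLocallyMatched A B :=
  locally_matched_of_strong_matching_general A B h
end
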